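/- arXiv:1912.04332 — 2 statements merged into one kernel-verified Lean document; each statement's English description precedes it below -/
import Mathlib

section
/- Let 𝒜 be a K-linear triangulated category with Serre functor S satisfying S² ≅ [2m], admitting a semiorthogonal decomposition 𝒜 = ⟨𝒦, L₁, …, L_N⟩ where {L₁,…,L_N} is an orthogonal exceptional collection. For each i let S_i be the cocone of the unique nonzero morphism L_i → S(L_i). Then S_i lies in 𝒦, i.e. RHom(L_j, S_i) = 0 for all j = 1, …, N. -/
/-!
Apply `Hom(L_j⟦-p⟧, -)` to the triangle `Sᵢ → Lᵢ → S Lᵢ → Sᵢ⟦1⟧`. A map `L_j⟦-p⟧ → Sᵢ` vanishes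
once post-composition with `vᵢ` is injective on `Hom(L_j⟦-p⟧, Lᵢ)` and `wᵢ⟦-1⟧` kills
`Hom(L_j⟦-p⟧, S Lᵢ⟦-1⟧)`. By orthogonality, and by Serre duality for the second group, both groups
vanish except for `j = i` with `p = 0`, resp. `p = 1`. There `Hom(Lᵢ, Lᵢ)` and
`Hom(Lᵢ, S Lᵢ) ≅ Hom(Lᵢ, Lᵢ)^∨` are lines: so `g ≫ vᵢ = 0` forces `g = 0` since `𝟙 ≫ vᵢ ≠ 0`,
and every map `Lᵢ → S Lᵢ` is a multiple of `vᵢ`, hence killed by `wᵢ`.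
-/

open CategoryTheory CategoryTheory.Limits CategoryTheory.Pretriangulated

universe v u

/-- A Serre functor on a `K`-linear category: an equivalence `S` with bifunctorial
isomorphisms `Hom(A, B) ≅ Hom(B, S A)^∨`. -/
structure SerreFunctor (K : Type*) [Field K] (C : Type u) [Category.{v} C]
    [Preadditive C] [CategoryTheory.Linear K C] where
  S : C ⥤ C
  isEquiv : S.IsEquivalence
  pairing : ∀ A B : C, (A ⟶ B) ≃ₗ[K] Module.Dual K (B ⟶ S.obj A)
  natural : ∀ {A A' B B' : C} (h : A' ⟶ A) (f : B ⟶ B') (g : A ⟶ B)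
    (φ : B' ⟶ S.obj A'),
    pairing A' B' (h ≫ g ≫ f) φ = pairing A B g (f ≫ φ ≫ S.map h)

namespace SerreFunctor

variable {K : Type*} [Field K] {C : Type u} [Category.{v} C] [Preadditive C]
  [CategoryTheory.Linear K C] (S : SerreFunctor K C)

lemma subsingleton_hom_iff {A B : C} :
    Subsingleton (A ⟶ B) ↔ Subsingleton (B ⟶ S.S.obj A) :=
  (S.pairing A B).toEquiv.subsingleton_congr.trans (Module.subsingleton_dual_iff K)

lemma finrank_hom_obj [∀ A B : C, FiniteDimensional K (A ⟶ B)] (A B : C) :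
    Module.finrank K (B ⟶ S.S.obj A) = Module.finrank K (A ⟶ B) := by
  rw [← Subspace.dual_finrank_eq, (S.pairing A B).finrank_eq]

end SerreFunctor

section FinrankOne

variable {K : Type*} [Field K] {C : Type u} [Category.{v} C] [Preadditive C]
  [CategoryTheory.Linear K C]

lemma eq_zero_of_comp_eq_zero_of_finrank_endo_eq_one {X Y : C}
    (hX : Module.finrank K (X ⟶ X) = 1) {v : X ⟶ Y} (hv : v ≠ 0) {g : X ⟶ X} (hg : g ≫ v = 0) :
    g = 0 := by
  by_contra hg0
  obtain ⟨c, hc⟩ := (finrank_eq_one_iff_of_nonzero' g hg0).mp hX (𝟙 X)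
  apply hv
  rw [← Category.id_comp v, ← hc, Linear.smul_comp, hg, smul_zero]

lemma comp_eq_zero_of_finrank_hom_eq_one {X Y Z : C} (hXY : Module.finrank K (X ⟶ Y) = 1)
    {v : X ⟶ Y} (hv : v ≠ 0) {w : Y ⟶ Z} (hvw : v ≫ w = 0) (k : X ⟶ Y) : k ≫ w = 0 := by
  obtain ⟨c, rfl⟩ := (finrank_eq_one_iff_of_nonzero' v hv).mp hXY k
  rw [Linear.smul_comp, hvw, smul_zero]

end FinrankOne

section Shift

variable {C : Type u} [Category.{v} C] [HasShift C ℤ]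

def shiftHomEquiv (X Y : C) (p : ℤ) : (X⟦-p⟧ ⟶ Y) ≃ (X ⟶ Y⟦p⟧) :=
  (shiftEquiv' C (-p) p (neg_add_cancel p)).toAdjunction.homEquiv X Y

def shiftShiftHomEquiv (X Y : C) (a b : ℤ) : (X⟦a⟧ ⟶ Y⟦b⟧) ≃ (X⟦a - b⟧ ⟶ Y) :=
  (shiftHomEquiv (X⟦a⟧) Y b).symm.trans
    (Iso.homCongr ((shiftFunctorAdd' C a (-b) (a - b) (by omega)).app X).symm (Iso.refl Y))

end Shift

namespace CategoryTheory.Pretriangulated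

variable {C : Type u} [Category.{v} C] [Preadditive C] [HasZeroObject C] [HasShift C ℤ]
  [∀ n : ℤ, (shiftFunctor C n).Additive] [Pretriangulated C]

lemma subsingleton_hom_obj₁_of_distTriang {T : Triangle C} (hT : T ∈ distTriang C) {X : C}
    (h₂ : ∀ g : X ⟶ T.obj₂, g ≫ T.mor₂ = 0 → g = 0)
    (h₃ : ∀ k : X ⟶ T.obj₃⟦(-1 : ℤ)⟧, k ≫ T.mor₃⟦(-1 : ℤ)⟧' = 0) :
    Subsingleton (X ⟶ T.obj₁) := by
  refine subsingleton_of_forall_eq 0 fun f => ?_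
  have hf : f ≫ T.mor₁ = 0 :=
    h₂ _ (by rw [Category.assoc, comp_distTriang_mor_zero₁₂ _ hT, comp_zero])
  obtain ⟨k, rfl⟩ : ∃ k : X ⟶ T.obj₃⟦(-1 : ℤ)⟧,
      f = k ≫ (-T.mor₃⟦(-1 : ℤ)⟧' ≫ (shiftEquiv C (1 : ℤ)).unitIso.inv.app _) :=
    Triangle.coyoneda_exact₂ _ (inv_rot_of_distTriang _ hT) f hf
  simp [reassoc_of% (h₃ k)]

end CategoryTheory.Pretriangulated

/-- In an `m`-Enriques category `𝒜 = ⟨𝒦, L₁, …, L_N⟩` with `{Lᵢ}` an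
orthogonal exceptional collection, the cocone `Sᵢ` of the nonzero map `Lᵢ → S(Lᵢ)`
lies in `𝒦`, i.e. `RHom(Lⱼ, Sᵢ) = 0` for all `j`. -/
theorem stmt4 {K : Type*} [Field K] {C : Type u} [Category.{v} C]
    [Preadditive C] [CategoryTheory.Linear K C] [HasZeroObject C] [HasShift C ℤ]
    [∀ n : ℤ, (CategoryTheory.shiftFunctor C n).Additive] [Pretriangulated C]
    [∀ A B : C, FiniteDimensional K (A ⟶ B)]
    (m : ℤ) (S : SerreFunctor K C)
    (hCY : Nonempty (S.S ⋙ S.S ≅ CategoryTheory.shiftFunctor C (2 * m)))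
    {N : ℕ} (hN : 1 ≤ N) (L : Fin N → C)
    (hexc0 : ∀ i, Module.finrank K (L i ⟶ L i) = 1)
    (hexcp : ∀ i, ∀ p : ℤ, p ≠ 0 → ∀ f : L i ⟶ (L i)⟦p⟧, f = 0)
    (horth : ∀ i j, i ≠ j → ∀ p : ℤ, ∀ f : L i ⟶ (L j)⟦p⟧, f = 0)
    (Si : Fin N → C) (u : ∀ i, Si i ⟶ L i) (v : ∀ i, L i ⟶ S.S.obj (L i))
    (w : ∀ i, S.S.obj (L i) ⟶ (Si i)⟦(1 : ℤ)⟧)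
    (hv : ∀ i, v i ≠ 0)
    (hTri : ∀ i, Triangle.mk (u i) (v i) (w i) ∈ distTriang C) :
    ∀ (j i : Fin N) (p : ℤ) (f : L j ⟶ (Si i)⟦p⟧), f = 0 := by
  have hL : ∀ j i (q : ℤ), (j ≠ i ∨ q ≠ 0) → Subsingleton (L j ⟶ (L i)⟦q⟧) := by
    refine fun j i q h => subsingleton_of_forall_eq 0 fun f => ?_
    rcases eq_or_ne j i with rfl | hji
    exacts [hexcp j q (h.resolve_left (not_not_intro rfl)) f, horth j i hji q f]
  intro j i p
  suffices Subsingleton ((L j)⟦-p⟧ ⟶ Si i) from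
    fun f => (shiftHomEquiv (L j) (Si i) p).symm.subsingleton.elim f 0
  refine subsingleton_hom_obj₁_of_distTriang (hTri i)
    (fun (g : (L j)⟦-p⟧ ⟶ L i) (hg : g ≫ v i = 0) => show g = 0 from ?_)
    (fun (k : (L j)⟦-p⟧ ⟶ (S.S.obj (L i))⟦(-1 : ℤ)⟧) => show k ≫ (w i)⟦(-1 : ℤ)⟧' = 0 from ?_)
  · by_cases hjp : j = i ∧ p = 0
    · obtain ⟨rfl, rfl⟩ := hjp
      rw [← cancel_epi ((shiftFunctorZero' C (-0 : ℤ) neg_zero).inv.app (L j)), comp_zero]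
      exact eq_zero_of_comp_eq_zero_of_finrank_endo_eq_one (hexc0 j) (hv j)
        (by rw [Category.assoc, hg, comp_zero])
    · have := (shiftHomEquiv (L j) (L i) p).subsingleton_congr.mpr (hL j i p (by tauto))
      exact Subsingleton.elim _ _
  · by_cases hjp : j = i ∧ p = 1
    · obtain ⟨rfl, rfl⟩ := hjp
      obtain ⟨k, rfl⟩ := (shiftFunctor C (-1 : ℤ)).map_surjective k
      have hvw : v j ≫ w j = 0 := comp_distTriang_mor_zero₂₃ _ (hTri j)
      rw [← Functor.map_comp, comp_eq_zero_of_finrank_hom_eq_one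
        (by rw [S.finrank_hom_obj]; exact hexc0 j) (hv j) hvw, Functor.map_zero]
    · have : Subsingleton ((L j)⟦-p⟧ ⟶ (S.S.obj (L i))⟦(-1 : ℤ)⟧) :=
        (shiftShiftHomEquiv _ _ (-p) (-1)).subsingleton_congr.mpr <| S.subsingleton_hom_iff.mp <|
          hL i j _ (by by_contra! h; exact hjp ⟨h.1.symm, by omega⟩)
      rw [Subsingleton.elim k 0, zero_comp]
end

section
/- Let F: 𝒯₁ → 𝒯₂ be an exact functor between triangulated categories with semiorthogonal decompositions 𝒯ⱼ = ⟨𝒟₁ʲ, 𝒟₂ʲ⟩ by admissible subcategories. Assume: (a) F(𝒟ᵢ¹) ⊆ 𝒟ᵢ² and the restrictions Fᵢ: 𝒟ᵢ¹ → 𝒟ᵢ² are equivalences for i = 1, 2; and (b) for all A ∈ 𝒟₁¹ and B ∈ 𝒟₂¹, postcomposition with F(η_B) gives an isomorphism Hom(F(A), F(α₁₁Ψ₁(B))) ≅ Hom(F(A), F(B)), where Ψ₁ = α₁₁^! ∘ α₂₁ is the gluing functor and η_B: α₁₁Ψ₁(B) → α₂₁(B) the counit. If F admits left and right adjoints, then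 F is an equivalence. -/
open CategoryTheory CategoryTheory.Limits CategoryTheory.Pretriangulated

universe v₁ v₂ w₁ w₂ w₃ w₄ u₁ u₂ u₃ u₄ u₅ u₆

/-!
Write `R` and `L` for the adjoints of `F`. On `α₁₁ A` the unit `X ⟶ R F X` is an isomorphism:
the decomposition triangle of `R F (α₁₁ A)` has zero first map, because
`Hom(α₂₁ B, R F α₁₁ A) = Hom(F α₂₁ B, F α₁₁ A) = 0`, so `R F (α₁₁ A)` is a retract of an object
of `𝒟₁¹`, on which `F` is fully faithful. Dually the counit `L F X ⟶ X` is an isomorphism on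
`α₂₁ B`. Hence `F` is bijective on all `Hom(Z, α₁₁ A)` and `Hom(α₂₁ B, Z)`, and by (b) on
`Hom(α₁₁ A, α₂₁ B)`. Five-lemma arguments along decomposition triangles extend this first to
`Hom(Z, α₂₁ B)` and then to all morphisms. Finally the essential image of a full exact functor
is closed under extensions and contains `𝒟₁²` and `𝒟₂²`, so it is everything.
-/

namespace CategoryTheory

section

variable {C : Type*} [Category C]

lemma isIso_of_yoneda_map_of_retract {W V P : C} (u : W ⟶ V) (h : Retract V P)
    (hP : Function.Surjective fun φ : P ⟶ W => φ ≫ u)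
    (hW : Function.Injective fun φ : W ⟶ W => φ ≫ u) : IsIso u := by
  obtain ⟨ψ, hψ : ψ ≫ u = h.r⟩ := hP h.r
  exact ⟨h.i ≫ ψ, hW (by simp [hψ]), by simp [hψ]⟩

lemma isIso_of_coyoneda_map_of_retract {V W P : C} (u : V ⟶ W) (h : Retract V P)
    (hP : Function.Surjective fun φ : W ⟶ P => u ≫ φ)
    (hW : Function.Injective fun φ : W ⟶ W => u ≫ φ) : IsIso u := by
  obtain ⟨ψ, hψ : u ≫ ψ = h.i⟩ := hP h.i
  exact ⟨ψ ≫ h.r, by simp [reassoc_of% hψ], hW (by simp [reassoc_of% hψ])⟩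

variable {D C' D' : Type*} [Category D] [Category C'] [Category D']

lemma Functor.map_bijective_iff_of_iso (F : C ⥤ D) {X X' Y Y' : C} (e : X ≅ X') (e' : Y ≅ Y') :
    Function.Bijective (F.map (X := X) (Y := Y)) ↔
      Function.Bijective (F.map (X := X') (Y := Y')) := by
  have h : F.map ∘ e.homCongr e' = (F.mapIso e).homCongr (F.mapIso e') ∘ F.map :=
    funext (F.map_homCongr e e')
  rw [← Function.Bijective.of_comp_iff _ (e.homCongr e').bijective, h,
    Function.Bijective.of_comp_iff' ((F.mapIso e).homCongr (F.mapIso e')).bijective]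

lemma Functor.map_bijective_of_iso_comp {F : C ⥤ D} {a : C' ⥤ C} {G : C' ⥤ D'} {b : D' ⥤ D}
    (e : a ⋙ F ≅ G ⋙ b)
    [a.Full] [a.Faithful] [G.Full] [G.Faithful] [b.Full] [b.Faithful] (X Y : C') :
    Function.Bijective (F.map (X := a.obj X) (Y := a.obj Y)) := by
  have hGb := ((Functor.FullyFaithful.ofFullyFaithful G).comp
    (.ofFullyFaithful b)).ofIso e.symm
  exact (Function.Bijective.of_comp_iff _
    ((Functor.FullyFaithful.ofFullyFaithful a).map_bijective X Y)).1 (hGb.map_bijective X Y)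

lemma Functor.obj_mem_essImage_of_iso_comp {F : C ⥤ D} {a : C' ⥤ C} {G : C' ⥤ D'}
    {b : D' ⥤ D} (e : a ⋙ F ≅ G ⋙ b) [G.EssSurj] (Y : D') :
    F.essImage (b.obj Y) :=
  ⟨a.obj (G.objPreimage Y), ⟨e.app _ ≪≫ b.mapIso (G.objObjPreimageIso Y)⟩⟩

lemma Functor.hom_eq_zero_of_iso_comp [HasZeroMorphisms D] {F : C ⥤ D}
    {C₁ C₂ D₁ D₂ : Type*} [Category C₁] [Category C₂] [Category D₁] [Category D₂]
    {a₁ : C₁ ⥤ C} {a₂ : C₂ ⥤ C} {G₁ : C₁ ⥤ D₁} {G₂ : C₂ ⥤ D₂}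
    {b₁ : D₁ ⥤ D} {b₂ : D₂ ⥤ D}
    (e₁ : a₁ ⋙ F ≅ G₁ ⋙ b₁) (e₂ : a₂ ⋙ F ≅ G₂ ⋙ b₂)
    (horth : ∀ (X : D₂) (Y : D₁) (f : b₂.obj X ⟶ b₁.obj Y), f = 0)
    {X : C₂} {Y : C₁} (u : F.obj (a₂.obj X) ⟶ F.obj (a₁.obj Y)) : u = 0 := by
  simpa using
    (e₂.app X).hom ≫= horth _ _ ((e₂.app X).inv ≫ u ≫ (e₁.app Y).hom) =≫ (e₁.app Y).inv

lemma Functor.map_bijective_of_bijective_comp_map_counit (F : C ⥤ D) {a : C' ⥤ C}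
    {r : C ⥤ C'} (adj : a ⊣ r) [a.Full] [a.Faithful] {X : C'} {Y : C}
    (hX : Function.Bijective (F.map (X := a.obj X) (Y := a.obj (r.obj Y))))
    (hb : Function.Bijective fun φ : F.obj (a.obj X) ⟶ F.obj (a.obj (r.obj Y)) =>
      φ ≫ F.map (adj.counit.app Y)) :
    Function.Bijective (F.map (X := a.obj X) (Y := Y)) := by
  have hε :
      Function.Bijective fun ψ : a.obj X ⟶ a.obj (r.obj Y) => ψ ≫ adj.counit.app Y := by
    have h : (fun ψ => ψ ≫ adj.counit.app Y) ∘ a.map (X := X) (Y := r.obj Y) =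
        (adj.homEquiv X Y).symm := by
      ext θ
      simp [Adjunction.homEquiv_counit]
    refine (Function.Bijective.of_comp_iff _
      ((Functor.FullyFaithful.ofFullyFaithful a).map_bijective X (r.obj Y))).1 ?_
    exact h ▸ Equiv.bijective _
  have h : F.map ∘ (fun ψ : a.obj X ⟶ a.obj (r.obj Y) => ψ ≫ adj.counit.app Y) =
      (fun φ => φ ≫ F.map (adj.counit.app Y)) ∘ F.map := by
    ext ψ
    simp
  rw [← Function.Bijective.of_comp_iff _ hε, h]
  exact hb.comp hX

namespace Adjunction

variable {F : C ⥤ D} {G : D ⥤ C}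

lemma map_bijective_iff_comp_unit (adj : F ⊣ G) (Z W : C) :
    Function.Bijective (F.map (X := Z) (Y := W)) ↔
      Function.Bijective fun φ : Z ⟶ W => φ ≫ adj.unit.app W := by
  have h : (fun φ : Z ⟶ W => φ ≫ adj.unit.app W) = adj.homEquiv Z (F.obj W) ∘ F.map := by
    ext φ
    simp [homEquiv_unit]
  rw [h, Function.Bijective.of_comp_iff' (adj.homEquiv _ _).bijective]

lemma map_bijective_iff_counit_comp (adj : G ⊣ F) (W Z : C) :
    Function.Bijective (F.map (X := W) (Y := Z)) ↔
      Function.Bijective fun φ : W ⟶ Z => adj.counit.app W ≫ φ := by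
  have h : (fun φ : W ⟶ Z => adj.counit.app W ≫ φ) =
      (adj.homEquiv (F.obj W) Z).symm ∘ F.map := by
    ext φ
    simp [homEquiv_counit]
  rw [h, Function.Bijective.of_comp_iff' (adj.homEquiv _ _).symm.bijective]

lemma isIso_unit_app_iff (adj : F ⊣ G) (W : C) :
    IsIso (adj.unit.app W) ↔ ∀ Z, Function.Bijective (F.map (X := Z) (Y := W)) := by
  simp only [adj.map_bijective_iff_comp_unit]
  exact isIso_iff_yoneda_map_bijective _

lemma isIso_counit_app_iff (adj : G ⊣ F) (W : C) :
    IsIso (adj.counit.app W) ↔ ∀ Z, Function.Bijective (F.map (X := W) (Y := Z)) := by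
  simp only [adj.map_bijective_iff_counit_comp]
  exact isIso_iff_coyoneda_map_bijective _

end Adjunction

end

section

variable {C D : Type*} [Category C] [Category D] [HasShift C ℤ] [HasShift D ℤ]
  (F : C ⥤ D) [F.CommShift ℤ]

lemma Functor.map_bijective_shift_iff (X Y : C) (n : ℤ) :
    Function.Bijective (F.map (X := X⟦n⟧) (Y := Y⟦n⟧)) ↔
      Function.Bijective (F.map (X := X) (Y := Y)) := by
  have h : F.map ∘ (shiftFunctor C n).map (X := X) (Y := Y) =
      ((F.commShiftIso n).app X).symm.homCongr ((F.commShiftIso n).app Y).symm ∘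
        (shiftFunctor D n).map ∘ F.map := by
    ext f
    simp
  rw [← Function.Bijective.of_comp_iff _
      ((Functor.FullyFaithful.ofFullyFaithful (shiftFunctor C n)).map_bijective X Y), h,
    Function.Bijective.of_comp_iff' (Equiv.bijective _),
    Function.Bijective.of_comp_iff' ((Functor.FullyFaithful.ofFullyFaithful _).map_bijective _ _)]

lemma Functor.map_bijective_shift_of_forall {X : C}
    (hX : ∀ Y, Function.Bijective (F.map (X := X) (Y := Y)))
    (n : ℤ) (Y : C) : Function.Bijective (F.map (X := X⟦n⟧) (Y := Y)) := by
  rw [F.map_bijective_iff_of_iso (Iso.refl _) ((shiftFunctor C n).objObjPreimageIso Y).symm,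
    F.map_bijective_shift_iff]
  exact hX _

lemma Functor.map_bijective_to_shift_of_forall {W : C}
    (hW : ∀ Z, Function.Bijective (F.map (X := Z) (Y := W)))
    (n : ℤ) (Z : C) : Function.Bijective (F.map (X := Z) (Y := W⟦n⟧)) := by
  rw [F.map_bijective_iff_of_iso ((shiftFunctor C n).objObjPreimageIso Z).symm (Iso.refl _),
    F.map_bijective_shift_iff]
  exact hW _

end

section

variable {C D : Type*} [Category C] [Category D] [HasZeroObject C] [Preadditive C]
  [HasShift C ℤ] [∀ n : ℤ, (shiftFunctor C n).Additive] [Pretriangulated C]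
  [HasZeroMorphisms D]

namespace Adjunction

variable {F : C ⥤ D} {G : D ⥤ C} [F.PreservesZeroMorphisms]

lemma isIso_unit_app_of_distTriang (adj : F ⊣ G) {W X₁ X₃ : C}
    {f : X₁ ⟶ G.obj (F.obj W)} {g : G.obj (F.obj W) ⟶ X₃} {h : X₃ ⟶ X₁⟦(1 : ℤ)⟧}
    (hT : Triangle.mk f g h ∈ distTriang C) (h₁ : ∀ u : F.obj X₁ ⟶ F.obj W, u = 0)
    (h₃ : Function.Bijective (F.map (X := X₃) (Y := W)))
    (hW : Function.Bijective (F.map (X := W) (Y := W))) : IsIso (adj.unit.app W) := by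
  have hf : f = 0 := (adj.homEquiv _ _).symm.injective (by
    rw [h₁ ((adj.homEquiv _ _).symm f)]
    simp [homEquiv_counit])
  have : Mono g := (Triangle.mor₁_eq_zero_iff_mono₂ _ hT).1 hf
  have := isSplitMono_of_mono g
  exact isIso_of_yoneda_map_of_retract _ ⟨g, retraction g, IsSplitMono.id g⟩
    ((adj.map_bijective_iff_comp_unit _ _).1 h₃).2
    ((adj.map_bijective_iff_comp_unit _ _).1 hW).1

lemma isIso_counit_app_of_distTriang (adj : G ⊣ F) {W X₁ X₃ : C}
    {f : X₁ ⟶ G.obj (F.obj W)} {g : G.obj (F.obj W) ⟶ X₃} {h : X₃ ⟶ X₁⟦(1 : ℤ)⟧}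
    (hT : Triangle.mk f g h ∈ distTriang C) (h₃ : ∀ u : F.obj W ⟶ F.obj X₃, u = 0)
    (h₁ : Function.Bijective (F.map (X := W) (Y := X₁)))
    (hW : Function.Bijective (F.map (X := W) (Y := W))) : IsIso (adj.counit.app W) := by
  have hg : g = 0 := (adj.homEquiv _ _).injective (by
    rw [h₃ (adj.homEquiv _ _ g)]
    simp [homEquiv_unit])
  have : Epi f := (Triangle.mor₂_eq_zero_iff_epi₁ _ hT).1 hg
  have := isSplitEpi_of_epi f
  exact isIso_of_coyoneda_map_of_retract _ ⟨section_ f, f, IsSplitEpi.id f⟩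
    ((adj.map_bijective_iff_counit_comp _ _).1 h₁).2
    ((adj.map_bijective_iff_counit_comp _ _).1 hW).1

end Adjunction

end

section

variable {C D : Type*} [Category C] [Category D] [HasZeroObject C] [HasZeroObject D]
  [Preadditive C] [Preadditive D] [HasShift C ℤ] [HasShift D ℤ]
  [∀ n : ℤ, (shiftFunctor C n).Additive] [∀ n : ℤ, (shiftFunctor D n).Additive]
  [Pretriangulated C] [Pretriangulated D]

def HasDecompositionTriangles {D₁ D₂ : Type*} [Category D₁] [Category D₂]
    (a₁ : D₁ ⥤ C) (a₂ : D₂ ⥤ C) : Prop :=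
  ∀ X : C, ∃ (B : D₂) (A : D₁) (f : a₂.obj B ⟶ X) (g : X ⟶ a₁.obj A)
    (h : a₁.obj A ⟶ (a₂.obj B)⟦(1 : ℤ)⟧), Triangle.mk f g h ∈ distTriang C

namespace Functor

variable (F : C ⥤ D) [F.CommShift ℤ] [F.IsTriangulated]

lemma map_injective_to_obj₂_of_distTriang {Z : C} (T : Triangle C) (hT : T ∈ distTriang C)
    (h₁ : Function.Injective (F.map (X := Z) (Y := T.obj₁)))
    (h₃ : Function.Injective (F.map (X := Z) (Y := T.obj₃)))
    (h₃' : Function.Surjective (F.map (X := Z) (Y := T.obj₃⟦(-1 : ℤ)⟧))) :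
    Function.Injective (F.map (X := Z) (Y := T.obj₂)) := by
  rw [← F.coe_mapAddHom, injective_iff_map_eq_zero]
  intro φ hφ
  obtain ⟨ψ, rfl⟩ := T.coyoneda_exact₂ hT φ (h₃ (by simpa using hφ =≫ F.map T.mor₂))
  obtain ⟨ρ, hρ⟩ := Triangle.coyoneda_exact₂ _
    (F.map_distinguished _ (inv_rot_of_distTriang _ hT)) (F.map ψ)
    ((F.map_comp _ _).symm.trans hφ)
  obtain ⟨σ, rfl⟩ := h₃' ρ
  have hψ : ψ = σ ≫ T.invRotate.mor₁ := h₁ (hρ.trans (F.map_comp _ _).symm)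
  rw [hψ]
  exact (Category.assoc _ _ _).trans
    ((σ ≫= comp_distTriang_mor_zero₁₂ _ (inv_rot_of_distTriang _ hT)).trans comp_zero)

lemma map_surjective_to_obj₂_of_distTriang {Z : C} (T : Triangle C) (hT : T ∈ distTriang C)
    (h₁ : Function.Surjective (F.map (X := Z) (Y := T.obj₁)))
    (h₃ : Function.Surjective (F.map (X := Z) (Y := T.obj₃)))
    (h₁' : Function.Injective (F.map (X := Z) (Y := T.obj₁⟦(1 : ℤ)⟧))) :
    Function.Surjective (F.map (X := Z) (Y := T.obj₂)) := by
  intro Φ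
  obtain ⟨τ, hτ⟩ := h₃ (Φ ≫ F.map T.mor₂)
  have hτ₃ : τ ≫ T.mor₃ = 0 := h₁' (by
    rw [F.map_comp, hτ, Category.assoc, ← F.map_comp, comp_distTriang_mor_zero₂₃ _ hT,
      F.map_zero, comp_zero, F.map_zero])
  obtain ⟨φ, rfl⟩ := T.coyoneda_exact₃ hT τ hτ₃
  obtain ⟨P, hP⟩ : ∃ P, Φ - F.map φ = P ≫ F.map T.mor₁ :=
    Triangle.coyoneda_exact₂ _ (F.map_distinguished _ hT) (Φ - F.map φ)
      (show (Φ - F.map φ) ≫ F.map T.mor₂ = 0 by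
        rw [Preadditive.sub_comp, ← F.map_comp, ← hτ, sub_self])
  obtain ⟨π, rfl⟩ := h₁ P
  exact ⟨φ + π ≫ T.mor₁, by rw [F.map_add, F.map_comp, ← hP]; abel⟩

lemma map_injective_from_obj₂_of_distTriang {W : C} (T : Triangle C) (hT : T ∈ distTriang C)
    (h₁ : Function.Injective (F.map (X := T.obj₁) (Y := W)))
    (h₃ : Function.Injective (F.map (X := T.obj₃) (Y := W)))
    (h₁' : Function.Surjective (F.map (X := T.obj₁⟦(1 : ℤ)⟧) (Y := W))) :
    Function.Injective (F.map (X := T.obj₂) (Y := W)) := by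
  rw [← F.coe_mapAddHom, injective_iff_map_eq_zero]
  intro φ hφ
  obtain ⟨ψ, rfl⟩ := T.yoneda_exact₂ hT φ (h₁ (by simpa using F.map T.mor₁ ≫= hφ))
  obtain ⟨ρ, hρ⟩ := Triangle.yoneda_exact₂ _
    (F.map_distinguished _ (rot_of_distTriang _ hT)) (F.map ψ)
    ((F.map_comp _ _).symm.trans hφ)
  obtain ⟨σ, rfl⟩ := h₁' ρ
  have hψ : ψ = T.mor₃ ≫ σ := h₃ (hρ.trans (F.map_comp _ _).symm)
  rw [hψ, ← Category.assoc, comp_distTriang_mor_zero₂₃ _ hT, zero_comp]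

lemma map_surjective_from_obj₂_of_distTriang {W : C} (T : Triangle C) (hT : T ∈ distTriang C)
    (h₁ : Function.Surjective (F.map (X := T.obj₁) (Y := W)))
    (h₃ : Function.Surjective (F.map (X := T.obj₃) (Y := W)))
    (h₃' : Function.Injective (F.map (X := T.obj₃⟦(-1 : ℤ)⟧) (Y := W))) :
    Function.Surjective (F.map (X := T.obj₂) (Y := W)) := by
  intro Φ
  obtain ⟨τ, hτ⟩ := h₁ (F.map T.mor₁ ≫ Φ)
  obtain ⟨ι, hι, hexact⟩ :
      ∃ ι : T.obj₃⟦(-1 : ℤ)⟧ ⟶ T.obj₁, ι ≫ T.mor₁ = 0 ∧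
      ∀ τ : T.obj₁ ⟶ W, ι ≫ τ = 0 → ∃ φ : T.obj₂ ⟶ W, τ = T.mor₁ ≫ φ :=
    ⟨_, comp_distTriang_mor_zero₁₂ _ (inv_rot_of_distTriang _ hT),
      Triangle.yoneda_exact₂ _ (inv_rot_of_distTriang _ hT)⟩
  obtain ⟨φ, rfl⟩ := hexact τ (h₃' (by
    rw [F.map_comp, hτ, ← Category.assoc, ← F.map_comp, hι, F.map_zero, zero_comp,
      F.map_zero]))
  obtain ⟨P, hP⟩ : ∃ P, Φ - F.map φ = F.map T.mor₂ ≫ P :=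
    Triangle.yoneda_exact₂ _ (F.map_distinguished _ hT) (Φ - F.map φ)
      (show F.map T.mor₁ ≫ (Φ - F.map φ) = 0 by
        rw [Preadditive.comp_sub, ← F.map_comp, ← hτ, sub_self])
  obtain ⟨π, rfl⟩ := h₃ P
  exact ⟨φ + T.mor₂ ≫ π, by rw [F.map_add, F.map_comp, ← hP]; abel⟩

lemma essSurj_of_hasDecompositionTriangles [F.Full] {D₁ D₂ : Type*}
    [Category D₁] [Category D₂] {a₁ : D₁ ⥤ D} {a₂ : D₂ ⥤ D}
    (hdec : HasDecompositionTriangles a₁ a₂) (h₁ : ∀ A, F.essImage (a₁.obj A))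
    (h₂ : ∀ B, F.essImage (a₂.obj B)) : F.EssSurj where
  mem_essImage Y := by
    obtain ⟨B, A, f, g, h, hT⟩ := hdec Y
    exact F.essImage.ext_of_isTriangulatedClosed₂ _ hT (h₂ B) (h₁ A)

variable {D₁ D₂ : Type*} [Category D₁] [Category D₂] {a₁ : D₁ ⥤ C} {a₂ : D₂ ⥤ C}

lemma map_bijective_to_of_hasDecompositionTriangles (hdec : HasDecompositionTriangles a₁ a₂)
    {W : C} (h₂ : ∀ B Y, Function.Bijective (F.map (X := a₂.obj B) (Y := Y)))
    (h₁ : ∀ A, Function.Bijective (F.map (X := a₁.obj A) (Y := W))) (Z : C) :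
    Function.Bijective (F.map (X := Z) (Y := W)) := by
  have hinj (Z : C) : Function.Injective (F.map (X := Z) (Y := W)) := by
    obtain ⟨B, A, f, g, h, hT⟩ := hdec Z
    exact F.map_injective_from_obj₂_of_distTriang (Triangle.mk f g h) hT (h₂ B W).1 (h₁ A).1
      (F.map_bijective_shift_of_forall (h₂ B) 1 W).2
  obtain ⟨B, A, f, g, h, hT⟩ := hdec Z
  exact ⟨hinj Z, F.map_surjective_from_obj₂_of_distTriang (Triangle.mk f g h) hT (h₂ B W).2
    (h₁ A).2 (hinj _)⟩

lemma map_bijective_of_hasDecompositionTriangles (hdec : HasDecompositionTriangles a₁ a₂)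
    (h₁ : ∀ A Z, Function.Bijective (F.map (X := Z) (Y := a₁.obj A)))
    (h₂ : ∀ B Z, Function.Bijective (F.map (X := Z) (Y := a₂.obj B))) (X Y : C) :
    Function.Bijective (F.map (X := X) (Y := Y)) := by
  obtain ⟨B, A, f, g, h, hT⟩ := hdec Y
  exact ⟨F.map_injective_to_obj₂_of_distTriang (Triangle.mk f g h) hT (h₂ B X).1 (h₁ A X).1
      (F.map_bijective_to_shift_of_forall (h₁ A) (-1) X).2,
    F.map_surjective_to_obj₂_of_distTriang (Triangle.mk f g h) hT (h₂ B X).2 (h₁ A X).2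
      (F.map_bijective_to_shift_of_forall (h₂ B) 1 X).1⟩

end Functor

end

end CategoryTheory

/-- Lemma 2.1: Let `F : 𝒯₁ → 𝒯₂` be an exact functor between
triangulated categories with semiorthogonal decompositions `𝒯ⱼ = ⟨𝒟₁ʲ, 𝒟₂ʲ⟩`
(given by fully faithful embeddings `αᵢⱼ`, semiorthogonality, and decomposition
triangles), admitting left and right adjoints. If (a) `F` restricts to
equivalences `Fᵢ : 𝒟ᵢ¹ → 𝒟ᵢ²` and (b) postcomposition with `F(η_B)` induces
isomorphisms `Hom(F(α₁₁ A), F(α₁₁ Ψ₁ B)) ≅ Hom(F(α₁₁ A), F(α₂₁ B))`, where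
`Ψ₁ = α₁₁^! ∘ α₂₁` is the gluing functor and `η_B` the counit, then `F` is an
equivalence. -/
theorem stmt14
    {T1 : Type u₁} [Category.{v₁} T1] [HasZeroObject T1] [Preadditive T1]
    [HasShift T1 ℤ] [∀ n : ℤ, (CategoryTheory.shiftFunctor T1 n).Additive]
    [Pretriangulated T1]
    {T2 : Type u₂} [Category.{v₂} T2] [HasZeroObject T2] [Preadditive T2]
    [HasShift T2 ℤ] [∀ n : ℤ, (CategoryTheory.shiftFunctor T2 n).Additive]
    [Pretriangulated T2]
    {D11 : Type u₃} [Category.{w₁} D11] {D21 : Type u₄} [Category.{w₂} D21]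
    {D12 : Type u₅} [Category.{w₃} D12] {D22 : Type u₆} [Category.{w₄} D22]
    (a11 : D11 ⥤ T1) [a11.Full] [a11.Faithful]
    (a21 : D21 ⥤ T1) [a21.Full] [a21.Faithful]
    (a12 : D12 ⥤ T2) [a12.Full] [a12.Faithful]
    (a22 : D22 ⥤ T2) [a22.Full] [a22.Faithful]
    -- semiorthogonality in `T1` and `T2`:
    (horth1 : ∀ (X : D21) (Y : D11) (f : a21.obj X ⟶ a11.obj Y), f = 0)
    (horth2 : ∀ (X : D22) (Y : D12) (f : a22.obj X ⟶ a12.obj Y), f = 0)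
    -- every object of `Tⱼ` sits in a decomposition triangle:
    (hdec1 : ∀ X : T1, ∃ (B : D21) (A : D11) (f : a21.obj B ⟶ X)
      (g : X ⟶ a11.obj A) (h : a11.obj A ⟶ (a21.obj B)⟦(1 : ℤ)⟧),
      Triangle.mk f g h ∈ distTriang T1)
    (hdec2 : ∀ X : T2, ∃ (B : D22) (A : D12) (f : a22.obj B ⟶ X)
      (g : X ⟶ a12.obj A) (h : a12.obj A ⟶ (a22.obj B)⟦(1 : ℤ)⟧),
      Triangle.mk f g h ∈ distTriang T2)
    -- the right adjoint `α₁₁^!` of `α₁₁`, giving the gluing functor `Ψ₁ = α₁₁^! ∘ α₂₁`: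
    (r11 : T1 ⥤ D11) (adj11 : a11 ⊣ r11)
    -- the exact functor `F` with left and right adjoints:
    (F : T1 ⥤ T2) [F.CommShift ℤ] [F.IsTriangulated]
    [F.IsLeftAdjoint] [F.IsRightAdjoint]
    -- (a) `F` restricts to equivalences on the components:
    (F1 : D11 ⥤ D12) (F2 : D21 ⥤ D22)
    (hF1 : a11 ⋙ F ≅ F1 ⋙ a12) (hF2 : a21 ⋙ F ≅ F2 ⋙ a22)
    [F1.IsEquivalence] [F2.IsEquivalence]
    -- (b) postcomposition with `F(η_B)` is bijective:
    (hb : ∀ (A : D11) (B : D21),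
      Function.Bijective fun φ : F.obj (a11.obj A) ⟶ F.obj (a11.obj (r11.obj (a21.obj B))) =>
        φ ≫ F.map (adj11.counit.app (a21.obj B))) :
    F.IsEquivalence := by
  have adjR := Adjunction.ofIsLeftAdjoint F
  have adjL := Adjunction.ofIsRightAdjoint F
  have hzero (B : D21) (A : D11) (u : F.obj (a21.obj B) ⟶ F.obj (a11.obj A)) : u = 0 :=
    Functor.hom_eq_zero_of_iso_comp hF1 hF2 horth2 u
  have h11 := Functor.map_bijective_of_iso_comp hF1
  have h22 := Functor.map_bijective_of_iso_comp hF2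
  have hto11 (A : D11) : ∀ Z, Function.Bijective (F.map (X := Z) (Y := a11.obj A)) := by
    obtain ⟨B₁, A₁, f, g, h, hT⟩ := hdec1 (F.rightAdjoint.obj (F.obj (a11.obj A)))
    exact (adjR.isIso_unit_app_iff _).1
      (adjR.isIso_unit_app_of_distTriang hT (hzero B₁ A) (h11 A₁ A) (h11 A A))
  have hfrom21 (B : D21) : ∀ Y, Function.Bijective (F.map (X := a21.obj B) (Y := Y)) := by
    obtain ⟨B₂, A₂, f, g, h, hT⟩ := hdec1 (F.leftAdjoint.obj (F.obj (a21.obj B)))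
    exact (adjL.isIso_counit_app_iff _).1
      (adjL.isIso_counit_app_of_distTriang hT (hzero B A₂) (h22 B B₂) (h22 B B))
  have hto21 (B : D21) := F.map_bijective_to_of_hasDecompositionTriangles hdec1 hfrom21
    fun A => F.map_bijective_of_bijective_comp_map_counit adj11 (h11 A _) (hb A B)
  obtain ⟨hFF⟩ := (Functor.FullyFaithful.nonempty_iff_map_bijective F).2
    (F.map_bijective_of_hasDecompositionTriangles hdec1 hto11 hto21)
  have := hFF.full
  have := hFF.faithful
  have := F.essSurj_of_hasDecompositionTriangles hdec2
    (Functor.obj_mem_essImage_of_iso_comp hF1) (Functor.obj_mem_essImage_of_iso_comp hF2)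
  exact { }
end
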